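/- Let E be a real inner product space, ε > 0 and σ > 0. The Moreau–Yosida regularization h_{ε,σ} is (Fréchet) differentiable at every point R ∈ E, and its gradient there equals H_{ε,σ}(R), i.e. the gradient is R/ε when ‖R‖ ≤ εσ and σ R/‖R‖ when ‖R‖ > εσ. In particular the regularized dissipation potential is smooth, which is the purpose of the regularization (3.1). -/

import Mathlib

/-!
On a ray the minimization defining `h_{ε,σ}` is one-dimensional: comparing `S` with `R` only
through `‖S‖` and `|‖R‖ - ‖S‖| ≤ ‖S - R‖` shows `h_{ε,σ}(R) = huber ε σ ‖R‖`, the minimum being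
attained at `0` when `‖R‖ ≤ εσ` and at the shrunk point `(1 - εσ/‖R‖) • R` otherwise. The Huber
function is quadratic up to `εσ` and affine beyond it, with matching slope `σ` at `εσ`, so it is
differentiable for `r ≥ εσ` with derivative `σ`; differentiability of `h_{ε,σ}` then follows from
the chain rule through the norm away from the origin, and from `h_{ε,σ} = ‖·‖² / (2ε)` near
points with `‖R‖ < εσ`.
-/

open Asymptotics Filter

noncomputable def huber (ε σ r : ℝ) : ℝ :=
  if r ≤ ε * σ then r ^ 2 / (2 * ε) else σ * r - ε * σ ^ 2 / 2

section Huber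

variable {ε σ : ℝ}

lemma huber_of_le_mul (hε : 0 < ε) {r : ℝ} (hr : ε * σ ≤ r) :
    huber ε σ r = σ * r - ε * σ ^ 2 / 2 := by
  unfold huber
  split_ifs with h
  · obtain rfl : r = ε * σ := le_antisymm h hr
    field_simp
    ring
  · rfl

lemma huber_le_add_sq_div (hε : 0 < ε) (r : ℝ) {s : ℝ} (hs : 0 ≤ s) :
    huber ε σ r ≤ σ * s + (r - s) ^ 2 / (2 * ε) := by
  unfold huber
  split_ifs with h
  · have key : σ * s + (r - s) ^ 2 / (2 * ε) - r ^ 2 / (2 * ε)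
        = s * (2 * (ε * σ - r) + s) / (2 * ε) := by field_simp; ring
    have : 0 ≤ s * (2 * (ε * σ - r) + s) / (2 * ε) := by
      apply div_nonneg (mul_nonneg hs (by linarith)) (by positivity)
    linarith
  · have key : σ * s + (r - s) ^ 2 / (2 * ε) - (σ * r - ε * σ ^ 2 / 2)
        = (r - s - ε * σ) ^ 2 / (2 * ε) := by field_simp; ring
    have : 0 ≤ (r - s - ε * σ) ^ 2 / (2 * ε) := by positivity
    linarith

lemma abs_huber_sub_affine_le (hε : 0 < ε) {r₀ : ℝ} (hr₀ : ε * σ ≤ r₀) (t : ℝ) :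
    |huber ε σ t - (σ * t - ε * σ ^ 2 / 2)| ≤ (t - r₀) ^ 2 / (2 * ε) := by
  unfold huber
  split_ifs with ht
  · have key : t ^ 2 / (2 * ε) - (σ * t - ε * σ ^ 2 / 2) = (ε * σ - t) ^ 2 / (2 * ε) := by
      field_simp; ring
    rw [key, abs_of_nonneg (by positivity)]
    exact div_le_div_of_nonneg_right (by nlinarith) (by positivity)
  · simp only [sub_self, abs_zero]
    positivity

lemma hasDerivAt_huber_of_le_mul (hε : 0 < ε) {r₀ : ℝ} (hr₀ : ε * σ ≤ r₀) :
    HasDerivAt (huber ε σ) σ r₀ := by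
  rw [hasDerivAt_iff_isLittleO]
  have hquad : (fun t => huber ε σ t - huber ε σ r₀ - (t - r₀) • σ)
      =O[nhds r₀] fun t => ‖t - r₀‖ ^ 2 := by
    refine IsBigO.of_bound (2 * ε)⁻¹ (Eventually.of_forall fun t => ?_)
    simp only [huber_of_le_mul hε hr₀, Real.norm_eq_abs, sq_abs, abs_pow, smul_eq_mul,
      ← div_eq_inv_mul]
    convert abs_huber_sub_affine_le hε hr₀ t using 2
    ring
  exact hquad.trans_isLittleO (isLittleO_pow_sub_sub r₀ one_lt_two)

end Huber

section InnerProductSpace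

variable {E : Type*} [NormedAddCommGroup E] [InnerProductSpace ℝ E] {ε σ : ℝ}

lemma iInf_add_sq_div_eq_huber (hε : 0 < ε) (hσ : 0 ≤ σ) (x : E) :
    ⨅ S : E, (σ * ‖S‖ + ‖S - x‖ ^ 2 / (2 * ε)) = huber ε σ ‖x‖ := by
  have hlower (S : E) : huber ε σ ‖x‖ ≤ σ * ‖S‖ + ‖S - x‖ ^ 2 / (2 * ε) := by
    refine (huber_le_add_sq_div hε ‖x‖ (norm_nonneg S)).trans ?_
    have : |‖x‖ - ‖S‖| ≤ ‖S - x‖ := norm_sub_rev S x ▸ abs_norm_sub_norm_le x S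
    gcongr σ * ‖S‖ + ?_ / (2 * ε)
    exact sq_le_sq' (abs_le.mp this).1 (abs_le.mp this).2
  have hbdd : BddBelow (Set.range fun S : E => σ * ‖S‖ + ‖S - x‖ ^ 2 / (2 * ε)) :=
    ⟨huber ε σ ‖x‖, Set.forall_mem_range.mpr hlower⟩
  refine le_antisymm ?_ (le_ciInf hlower)
  by_cases hx : ‖x‖ ≤ ε * σ
  · refine (ciInf_le hbdd 0).trans_eq ?_
    simp [huber, hx]
  · push Not at hx
    have hxpos : 0 < ‖x‖ := (mul_nonneg hε.le hσ).trans_lt hx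
    have hratio : ε * σ / ‖x‖ ≤ 1 := (div_le_one hxpos).mpr hx.le
    have hshrink : ‖(1 - ε * σ / ‖x‖) • x‖ = ‖x‖ - ε * σ := by
      rw [norm_smul, Real.norm_of_nonneg (by linarith), sub_mul, one_mul,
        div_mul_cancel₀ _ hxpos.ne']
    have hstep : ‖(1 - ε * σ / ‖x‖) • x - x‖ = ε * σ := by
      rw [show (1 - ε * σ / ‖x‖) • x - x = -((ε * σ / ‖x‖) • x) by module, norm_neg,
        norm_smul, Real.norm_of_nonneg (by positivity), div_mul_cancel₀ _ hxpos.ne']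
    refine (ciInf_le hbdd ((1 - ε * σ / ‖x‖) • x)).trans_eq ?_
    rw [hshrink, hstep, huber, if_neg hx.not_ge]
    field_simp
    ring

lemma hasFDerivAt_norm_of_ne_zero {x : E} (hx : x ≠ 0) :
    HasFDerivAt (fun y : E => ‖y‖) (‖x‖⁻¹ • innerSL ℝ x) x := by
  have hsqrt := (Real.hasDerivAt_sqrt (by positivity : ‖x‖ ^ 2 ≠ 0)).comp_hasFDerivAt x
    (hasStrictFDerivAt_norm_sq x).hasFDerivAt
  simp only [Function.comp_def, Real.sqrt_sq (norm_nonneg _)] at hsqrt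
  refine hsqrt.congr_fderiv ?_
  ext v
  simp
  ring

lemma hasFDerivAt_huber_norm_of_lt {x : E} (hx : ‖x‖ < ε * σ) :
    HasFDerivAt (fun y : E => huber ε σ ‖y‖) (innerSL ℝ (ε⁻¹ • x)) x := by
  refine (((hasStrictFDerivAt_norm_sq x).hasFDerivAt.mul_const (2 * ε)⁻¹).congr_fderiv ?_)
    |>.congr_of_eventuallyEq ?_
  · ext v
    simp
    ring
  · filter_upwards [(isOpen_lt continuous_norm continuous_const).mem_nhds hx] with y hy
    rw [huber, if_pos hy.le, div_eq_mul_inv]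

lemma hasFDerivAt_huber_norm_of_le {x : E} (hε : 0 < ε) (hx : x ≠ 0) (hxσ : ε * σ ≤ ‖x‖) :
    HasFDerivAt (fun y : E => huber ε σ ‖y‖) (innerSL ℝ ((σ / ‖x‖) • x)) x := by
  refine ((hasDerivAt_huber_of_le_mul hε hxσ).comp_hasFDerivAt x
    (hasFDerivAt_norm_of_ne_zero hx)).congr_fderiv ?_
  ext v
  simp
  ring

end InnerProductSpace

/-- the Moreau–Yosida regularization `h_{ε,σ}` is Fréchet differentiable at every
point `R`, with gradient `R/ε` when `‖R‖ ≤ εσ` and `σ R/‖R‖` when `‖R‖ > εσ`. -/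
theorem stmt_2 {E : Type*} [NormedAddCommGroup E] [InnerProductSpace ℝ E]
    (ε σ : ℝ) (hε : 0 < ε) (hσ : 0 < σ) (R : E) :
    HasFDerivAt (fun R' : E => ⨅ S : E, (σ * ‖S‖ + ‖S - R'‖ ^ 2 / (2 * ε)))
      (innerSL ℝ (if ‖R‖ ≤ ε * σ then ε⁻¹ • R else (σ / ‖R‖) • R)) R := by
  simp_rw [iInf_add_sq_div_eq_huber hε hσ.le]
  have hεσ : 0 < ε * σ := mul_pos hε hσ
  split_ifs with hR
  · rcases hR.lt_or_eq with hlt | heq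
    · exact hasFDerivAt_huber_norm_of_lt hlt
    · have hR0 : R ≠ 0 := norm_pos_iff.mp (heq ▸ hεσ)
      convert hasFDerivAt_huber_norm_of_le hε hR0 heq.ge using 3
      rw [heq]
      field_simp
  · push Not at hR
    exact hasFDerivAt_huber_norm_of_le hε (norm_pos_iff.mp (hεσ.trans hR)) hR.le
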